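/- arXiv:1904.01045 — 2 statements merged into one kernel-verified Lean document; each statement's English description precedes it below -/
import Mathlib

section
/- Let d ≥ 1, let E be a linear subspace of ℝ^d, and let v ∈ ℝ^d be a unit vector orthogonal to every element of E. Let r > 0, let K₀ ≥ 1 be a natural number, and let x₁, …, x_ℓ ∈ E be points such that for every index i, the number of indices j ≠ i with ‖x_i − x_j‖ ≤ 4r is at most K₀ − 1. Then there exist natural numbers k₁, …, k_ℓ ∈ {1, …, K₀} such that the closed balls closedBall(x_i + 5·r·k_i·v, r), for i = 1, …, ℓ, are pairwise disjoint. -/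
open Metric Set

open scoped RealInnerProductSpace

lemma exists_coloring {V : Type*} [NormedAddCommGroup V] (r : ℝ) (K₀ : ℕ) (hK₀ : 1 ≤ K₀) :
    ∀ (ℓ : ℕ) (x : Fin ℓ → V),
      (∀ i, {j | j ≠ i ∧ ‖x i - x j‖ ≤ 4 * r}.ncard ≤ K₀ - 1) →
      ∃ k : Fin ℓ → ℕ, (∀ i, 1 ≤ k i ∧ k i ≤ K₀) ∧
        ∀ i j, i ≠ j → ‖x i - x j‖ ≤ 4 * r → k i ≠ k j := by
  intro ℓ
  induction ℓ with
  | zero =>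
    intro x _
    exact ⟨fun i => 1, fun i => i.elim0, fun i => i.elim0⟩
  | succ n ih =>
    intro x hmult
    set x' : Fin n → V := fun j => x j.castSucc with hx'
    have hinj := Fin.castSucc_injective n
    have hmult' : ∀ i, {j | j ≠ i ∧ ‖x' i - x' j‖ ≤ 4 * r}.ncard ≤ K₀ - 1 := by
      intro i
      have hsub : (Fin.castSucc '' {j | j ≠ i ∧ ‖x' i - x' j‖ ≤ 4 * r}) ⊆
          {j | j ≠ i.castSucc ∧ ‖x i.castSucc - x j‖ ≤ 4 * r} := by
        rintro _ ⟨j, ⟨hj1, hj2⟩, rfl⟩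
        exact ⟨fun h => hj1 (hinj h), hj2⟩
      calc {j | j ≠ i ∧ ‖x' i - x' j‖ ≤ 4 * r}.ncard
          = (Fin.castSucc '' {j | j ≠ i ∧ ‖x' i - x' j‖ ≤ 4 * r}).ncard :=
            (Set.ncard_image_of_injective _ hinj).symm
        _ ≤ {j | j ≠ i.castSucc ∧ ‖x i.castSucc - x j‖ ≤ 4 * r}.ncard :=
            Set.ncard_le_ncard hsub (Set.toFinite _)
        _ ≤ K₀ - 1 := hmult i.castSucc
    obtain ⟨k', hk'b, hk'd⟩ := ih x' hmult'
    -- set of indices close to the last point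
    set S : Set (Fin n) := {j | ‖x (Fin.last n) - x' j‖ ≤ 4 * r} with hS
    have hScard : S.ncard ≤ K₀ - 1 := by
      have hsub : (Fin.castSucc '' S) ⊆
          {j | j ≠ Fin.last n ∧ ‖x (Fin.last n) - x j‖ ≤ 4 * r} := by
        rintro _ ⟨j, hj, rfl⟩
        exact ⟨Fin.castSucc_lt_last j |>.ne, hj⟩
      calc S.ncard = (Fin.castSucc '' S).ncard := (Set.ncard_image_of_injective _ hinj).symm
        _ ≤ _ := Set.ncard_le_ncard hsub (Set.toFinite _)
        _ ≤ K₀ - 1 := hmult (Fin.last n)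
    have hUcard : (k' '' S).ncard < K₀ := by
      have := Set.ncard_image_le (s := S) (f := k') (Set.toFinite _)
      omega
    have hex : ∃ c, (1 ≤ c ∧ c ≤ K₀) ∧ c ∉ k' '' S := by
      by_contra h
      push_neg at h
      have hsub : Set.Icc 1 K₀ ⊆ k' '' S := fun c hc => h c ⟨hc.1, hc.2⟩
      have hle := Set.ncard_le_ncard hsub (Set.toFinite _)
      have hicc : (Set.Icc 1 K₀).ncard = K₀ := by
        rw [Set.ncard_eq_toFinset_card', Set.toFinset_Icc, Nat.card_Icc]
        omega
      omega
    obtain ⟨c, hcb, hcS⟩ := hex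
    refine ⟨Fin.lastCases c k', ?_, ?_⟩
    · intro i
      refine Fin.lastCases ?_ ?_ i
      · simpa using hcb
      · intro j; simpa using hk'b j
    · intro i j hij hclose
      induction i using Fin.lastCases with
      | last =>
        induction j using Fin.lastCases with
        | last => exact absurd rfl hij
        | cast j' =>
          simp only [Fin.lastCases_last, Fin.lastCases_castSucc]
          intro heq
          exact hcS ⟨j', hclose, heq.symm⟩
      | cast i' =>
        induction j using Fin.lastCases with
        | last =>
          simp only [Fin.lastCases_last, Fin.lastCases_castSucc]
          intro heq
          refine hcS ⟨i', ?_, heq⟩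
          rw [hS]; simp only [Set.mem_setOf_eq]
          rwa [norm_sub_rev]
        | cast j' =>
          simp only [Fin.lastCases_castSucc]
          exact hk'd i' j' (fun h => hij (congrArg Fin.castSucc h)) hclose

theorem shifted_disjoint_balls (d : ℕ) (hd : 1 ≤ d)
    (E : Submodule ℝ (EuclideanSpace ℝ (Fin d)))
    (v : EuclideanSpace ℝ (Fin d)) (hv : ‖v‖ = 1)
    (hvE : ∀ e ∈ E, ⟪v, e⟫ = 0)
    (r : ℝ) (hr : 0 < r) (K₀ : ℕ) (hK₀ : 1 ≤ K₀)
    (ℓ : ℕ) (x : Fin ℓ → EuclideanSpace ℝ (Fin d)) (hx : ∀ i, x i ∈ E)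
    (hmult : ∀ i, {j | j ≠ i ∧ ‖x i - x j‖ ≤ 4 * r}.ncard ≤ K₀ - 1) :
    ∃ k : Fin ℓ → ℕ, (∀ i, 1 ≤ k i ∧ k i ≤ K₀) ∧
      ∀ i j, i ≠ j →
        Disjoint (closedBall (x i + (5 * r * (k i : ℝ)) • v) r)
          (closedBall (x j + (5 * r * (k j : ℝ)) • v) r) := by
  obtain ⟨k, hkb, hkd⟩ := exists_coloring r K₀ hK₀ ℓ x hmult
  refine ⟨k, hkb, ?_⟩
  intro i j hij
  have hperp : ⟪x i - x j, v⟫ = 0 := by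
    rw [real_inner_comm]; exact hvE _ (E.sub_mem (hx i) (hx j))
  have hdist : dist (x i + (5 * r * (k i : ℝ)) • v) (x j + (5 * r * (k j : ℝ)) • v) ^ 2
      = ‖x i - x j‖ ^ 2 + (5 * r * (k i : ℝ) - 5 * r * (k j : ℝ)) ^ 2 := by
    rw [dist_eq_norm]
    have h1 : (x i + (5 * r * (k i : ℝ)) • v) - (x j + (5 * r * (k j : ℝ)) • v)
        = (x i - x j) + (5 * r * (k i : ℝ) - 5 * r * (k j : ℝ)) • v := by module
    rw [h1, norm_add_sq_real, real_inner_smul_right, hperp, norm_smul, hv]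
    simp [mul_pow, sq_abs]
  have key : (r + r) ^ 2 < dist (x i + (5 * r * (k i : ℝ)) • v)
      (x j + (5 * r * (k j : ℝ)) • v) ^ 2 := by
    rw [hdist]
    by_cases h : ‖x i - x j‖ ≤ 4 * r
    · have hne : k i ≠ k j := hkd i j hij h
      have hge : (1 : ℝ) ≤ ((k i : ℝ) - (k j : ℝ)) ^ 2 := by
        rcases Nat.lt_or_ge (k i) (k j) with h' | h'
        · have h1 : (k i : ℝ) + 1 ≤ (k j : ℝ) := by exact_mod_cast h'
          nlinarith
        · have h'' : k j < k i := lt_of_le_of_ne h' (Ne.symm hne)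
          have h1 : (k j : ℝ) + 1 ≤ (k i : ℝ) := by exact_mod_cast h''
          nlinarith
      nlinarith [sq_nonneg (‖x i - x j‖), hr.le, sq_nonneg r]
    · push_neg at h
      nlinarith [sq_nonneg (5 * r * (k i : ℝ) - 5 * r * (k j : ℝ)), hr]
  exact closedBall_disjoint_closedBall (lt_of_pow_lt_pow_left₀ 2 dist_nonneg key)
end

section
/- Let (X, dist) be a compact metric space, let f : X → X be a homeomorphism, let U ⊆ X be a subset, and set Λ_U(f) = ⋂_{j ∈ ℤ} f^j(closure U). Then for every open set V containing Λ_U(f) there exists σ > 0 such that for every homeomorphism g : X → X satisfying dist(g x, f x) < σ and dist(g⁻¹ x, f⁻¹ x) < σ for all x ∈ X, one has ⋂_{j ∈ ℤ} g^j(closure U) ⊆ V. -/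
open Metric Set

private lemma iterate_approx_one {X : Type*} [MetricSpace X] [CompactSpace X]
    (f : X → X) (hf : Continuous f) :
    ∀ (k : ℕ) (ε : ℝ), 0 < ε → ∃ σ : ℝ, 0 < σ ∧ ∀ g : X → X,
      (∀ x, dist (g x) (f x) < σ) → ∀ x, dist (g^[k] x) (f^[k] x) < ε := by
  intro k
  induction k with
  | zero => exact fun ε hε => ⟨ε, hε, fun g _ x => by simpa using hε⟩
  | succ k ih =>
    intro ε hε
    obtain ⟨δ, hδ, hδ'⟩ := Metric.uniformContinuous_iff.mp
      (CompactSpace.uniformContinuous_of_continuous hf) (ε / 2) (half_pos hε)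
    obtain ⟨σ₁, hσ₁, h₁⟩ := ih δ hδ
    refine ⟨min σ₁ (ε / 2), lt_min hσ₁ (half_pos hε), fun g hg x => ?_⟩
    have hg1 : ∀ x, dist (g x) (f x) < σ₁ := fun x => (hg x).trans_le (min_le_left _ _)
    rw [Function.iterate_succ_apply', Function.iterate_succ_apply']
    calc dist (g (g^[k] x)) (f (f^[k] x))
        ≤ dist (g (g^[k] x)) (f (g^[k] x)) + dist (f (g^[k] x)) (f (f^[k] x)) :=
          dist_triangle _ _ _
      _ < ε / 2 + ε / 2 :=
          add_lt_add ((hg _).trans_le (min_le_right _ _)) (hδ' (h₁ g hg1 x))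
      _ = ε := add_halves ε

private lemma iterate_approx {X : Type*} [MetricSpace X] [CompactSpace X]
    (f : X → X) (hf : Continuous f) :
    ∀ (n : ℕ) (ε : ℝ), 0 < ε → ∃ σ : ℝ, 0 < σ ∧ ∀ g : X → X,
      (∀ x, dist (g x) (f x) < σ) → ∀ k ≤ n, ∀ x, dist (g^[k] x) (f^[k] x) < ε := by
  intro n
  induction n with
  | zero =>
    intro ε hε
    refine ⟨ε, hε, fun g _ k hk x => ?_⟩
    interval_cases k
    simpa using hε
  | succ n ih =>
    intro ε hε
    obtain ⟨σ₁, hσ₁, h₁⟩ := ih ε hε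
    obtain ⟨σ₂, hσ₂, h₂⟩ := iterate_approx_one f hf (n + 1) ε hε
    refine ⟨min σ₁ σ₂, lt_min hσ₁ hσ₂, fun g hg k hk x => ?_⟩
    rcases Nat.lt_succ_iff_lt_or_eq.mp (Nat.lt_succ_of_le hk) with h | h
    · exact h₁ g (fun x => (hg x).trans_le (min_le_left _ _)) k (Nat.lt_succ_iff.mp h) x
    · subst h
      exact h₂ g (fun x => (hg x).trans_le (min_le_right _ _)) x

theorem maximal_invariant_set_upper_semicontinuous
    {X : Type*} [MetricSpace X] [CompactSpace X]
    (f : X ≃ₜ X) (U : Set X) (V : Set X) (hV : IsOpen V)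
    (hΛ : ⋂ j : ℤ, (f.toEquiv ^ j) '' closure U ⊆ V) :
    ∃ σ : ℝ, 0 < σ ∧
      ∀ g : X ≃ₜ X,
        (∀ x, dist (g x) (f x) < σ) →
        (∀ x, dist (g.symm x) (f.symm x) < σ) →
        ⋂ j : ℤ, (g.toEquiv ^ j) '' closure U ⊆ V := by
  have hKc : IsCompact (closure U) := isClosed_closure.isCompact
  -- coercion of integer powers of equivs as iterates
  have key1 : ∀ (e : X ≃ₜ X) (k : ℕ), ⇑(e.toEquiv ^ (k : ℤ)) = (⇑e)^[k] := by
    intro e k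
    rw [zpow_natCast]
    exact (Equiv.Perm.iterate_eq_pow e.toEquiv k).symm
  have key2 : ∀ (e : X ≃ₜ X) (k : ℕ), ⇑(e.toEquiv ^ (-(k : ℤ))) = (⇑e.symm)^[k] := by
    intro e k
    rw [zpow_neg, zpow_natCast, ← inv_pow]
    have h' : e.toEquiv⁻¹ = e.symm.toEquiv := rfl
    rw [h']
    exact (Equiv.Perm.iterate_eq_pow e.symm.toEquiv k).symm
  have hzpow : ∀ (j : ℤ), (∀ (e : X ≃ₜ X), ⇑(e.toEquiv ^ j) = (⇑e)^[j.natAbs]) ∨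
      (∀ (e : X ≃ₜ X), ⇑(e.toEquiv ^ j) = (⇑e.symm)^[j.natAbs]) := by
    intro j
    rcases Int.natAbs_eq j with h | h
    · left
      intro e
      conv_lhs => rw [h]
      exact key1 e j.natAbs
    · right
      intro e
      conv_lhs => rw [h]
      exact key2 e j.natAbs
  have hcont : ∀ j : ℤ, Continuous ⇑(f.toEquiv ^ j) := by
    intro j
    rcases hzpow j with h | h
    · rw [h f]; exact f.continuous.iterate _
    · rw [h f]; exact f.symm.continuous.iterate _
  set A : ℤ → Set X := fun j => (f.toEquiv ^ j) '' closure U with hA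
  have hAcl : ∀ j, IsClosed (A j) := fun j => (hKc.image (hcont j)).isClosed
  -- Step 1: a finite intersection already inside V
  set C : ℕ → Set X := fun n => ⋂ j ∈ Finset.Icc (-(n : ℤ)) (n : ℤ), A j with hC
  have hCcl : ∀ n, IsClosed (C n) :=
    fun n => isClosed_biInter fun j _ => hAcl j
  have hCanti : ∀ n, C (n + 1) ⊆ C n := by
    intro n x hx
    rw [hC, mem_iInter₂] at hx ⊢
    intro j hj
    apply hx
    rw [Finset.mem_Icc] at hj ⊢
    push_cast at hj ⊢
    omega
  have hN : ∃ N : ℕ, C N ⊆ V := by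
    by_contra hcon
    push_neg at hcon
    have hne : ∀ n, (C n \ V).Nonempty := by
      intro n
      rcases not_subset.mp (hcon n) with ⟨x, hx1, hx2⟩
      exact ⟨x, hx1, hx2⟩
    have := IsCompact.nonempty_iInter_of_sequence_nonempty_isCompact_isClosed
      (fun n => C n \ V) (fun n => diff_subset_diff_left (hCanti n)) hne
      (((hCcl 0).sdiff hV).isCompact) (fun n => (hCcl n).sdiff hV)
    obtain ⟨x, hx⟩ := this
    simp only [mem_iInter, mem_diff] at hx
    have hxΛ : x ∈ ⋂ j : ℤ, A j := by
      rw [mem_iInter]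
      intro j
      have := (hx j.natAbs).1
      rw [hC, mem_iInter₂] at this
      exact this j (by rw [Finset.mem_Icc]; omega)
    exact (hx 0).2 (hΛ hxΛ)
  obtain ⟨N, hNV⟩ := hN
  -- Step 2: a cthickening of the finite intersection inside V
  set E : ℕ → Set X := fun m => ⋂ j ∈ Finset.Icc (-(N : ℤ)) (N : ℤ),
    cthickening (1 / (m + 1)) (A j) with hE
  have hEcl : ∀ m, IsClosed (E m) :=
    fun m => isClosed_biInter fun j _ => isClosed_cthickening
  have hEanti : ∀ m, E (m + 1) ⊆ E m := by
    intro m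
    apply biInter_mono (subset_refl _)
    intro j _
    apply cthickening_mono
    rw [div_le_div_iff₀] <;> push_cast <;> nlinarith [Nat.cast_nonneg (α := ℝ) m]
  have hM : ∃ M : ℕ, E M ⊆ V := by
    by_contra hcon
    push_neg at hcon
    have hne : ∀ m, (E m \ V).Nonempty := by
      intro m
      rcases not_subset.mp (hcon m) with ⟨x, hx1, hx2⟩
      exact ⟨x, hx1, hx2⟩
    have := IsCompact.nonempty_iInter_of_sequence_nonempty_isCompact_isClosed
      (fun m => E m \ V) (fun m => diff_subset_diff_left (hEanti m)) hne
      (((hEcl 0).sdiff hV).isCompact) (fun m => (hEcl m).sdiff hV)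
    obtain ⟨x, hx⟩ := this
    simp only [mem_iInter, mem_diff] at hx
    have hxC : x ∈ C N := by
      rw [hC, mem_iInter₂]
      intro j hj
      have hinf : EMetric.infEdist x (A j) = 0 := by
        have hle : ∀ m : ℕ, EMetric.infEdist x (A j) ≤ ENNReal.ofReal (1 / (m + 1)) := by
          intro m
          have := (hx m).1
          rw [hE, mem_iInter₂] at this
          exact mem_cthickening_iff.mp (this j hj)
        have htend : Filter.Tendsto (fun m : ℕ => ENNReal.ofReal (1 / (m + 1)))
            Filter.atTop (nhds 0) := by
          have h0 : Filter.Tendsto (fun m : ℕ => (1 : ℝ) / (m + 1))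
              Filter.atTop (nhds 0) := tendsto_one_div_add_atTop_nhds_zero_nat
          simpa using (ENNReal.tendsto_ofReal h0)
        simpa using ge_of_tendsto' htend hle
      have hxcl : x ∈ closure (A j) := EMetric.mem_closure_iff_infEdist_zero.mpr hinf
      rwa [(hAcl j).closure_eq] at hxcl
    exact (hx 0).2 (hNV hxC)
  obtain ⟨M, hMV⟩ := hM
  have hεpos : (0 : ℝ) < 1 / (M + 1) := by positivity
  -- Step 3: choose σ
  obtain ⟨σ₁, hσ₁, h₁⟩ := iterate_approx (⇑f) f.continuous N (1 / (M + 1)) hεpos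
  obtain ⟨σ₂, hσ₂, h₂⟩ := iterate_approx (⇑f.symm) f.symm.continuous N (1 / (M + 1)) hεpos
  refine ⟨min σ₁ σ₂, lt_min hσ₁ hσ₂, fun g hg hg' x hx => ?_⟩
  apply hMV
  rw [hE, mem_iInter₂]
  intro j hj
  rw [Finset.mem_Icc] at hj
  have hjN : j.natAbs ≤ N := by omega
  have hxg : x ∈ (g.toEquiv ^ j) '' closure U := by
    rw [mem_iInter] at hx; exact hx j
  obtain ⟨y, hy, hyx⟩ := hxg
  have hdist : dist x ((f.toEquiv ^ j) y) < 1 / (M + 1) := by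
    rcases hzpow j with h | h
    · rw [← hyx, h g, h f]
      exact h₁ (⇑g) (fun z => (hg z).trans_le (min_le_left _ _)) j.natAbs hjN y
    · rw [← hyx, h g, h f]
      exact h₂ (⇑g.symm) (fun z => (hg' z).trans_le (min_le_right _ _)) j.natAbs hjN y
  apply thickening_subset_cthickening
  rw [mem_thickening_iff]
  exact ⟨(f.toEquiv ^ j) y, ⟨y, hy, rfl⟩, hdist⟩
end
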